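/- arXiv:2603.21680 — 4 statements merged into one kernel-verified Lean document; each statement's English description precedes it below -/
import Mathlib

section
/- For all integers k ≥ 0 and d ≥ k − 1, ∑_{i=0}^{d} A(d+1,i) · i^k = (d+1)! · k! · c_k, where c_k is the coefficient of z^k in the formal power series F(z)^{d+2} · E(z), with F(z) = ∑_{n≥0} z^n/(n+1)! and E(z) = ∑_{n≥0} (−1)^n z^n/n!. (Equivalently, the exponential generating function of the moments of the descent statistic is ((e^z − 1)/z)^{d+2} · e^{−z}.) -/
/-!
Let `M_n(z) = ∑_σ e^{des(σ) z}` over permutations of `n` letters, the exponential generating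
function of the moments of `des`. Inserting the value `n + 1` into a permutation `τ` of `n`
letters keeps `des τ` in the `des τ + 1` slots right after a descent or at the end, and raises it
by one in the other `n - des τ` slots; hence
`M_{n+1} = (1 + n e^z) M_n + (1 - e^z) M_n'`.
With `F = (e^z - 1)/z`, the identities `z F = e^z - 1` and `z F' = e^z - F` show that
`H_n = n! F^{n+1} e^{-z}` satisfies the same recursion exactly. The recursion sends
`X^{n+1} ∣ M_n - H_n` to `X^{n+2} ∣ M_{n+1} - H_{n+1}`: the coefficient `m_k` enters the `k`-th
coefficient of the right-hand side with the factor `n + 1 - k`, which vanishes at `k = n + 1`.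
So `M_n` and `H_n` agree up to degree `n`, which is the claim.
-/

open Finset

/-- The number of descents of a permutation of `Fin n`. -/
def descentCount {n : ℕ} (σ : Equiv.Perm (Fin n)) : ℕ :=
  (Finset.univ.filter fun i : Fin n =>
    ∃ h : (i : ℕ) + 1 < n, σ ⟨(i : ℕ) + 1, h⟩ < σ i).card

/-- The Eulerian number `A(n,k)`: the number of permutations of `{1,…,n}` with
exactly `k` descents. -/
def eulerian (n k : ℕ) : ℕ :=
  (Finset.univ.filter fun σ : Equiv.Perm (Fin n) => descentCount σ = k).card

open PowerSeries Nat Equiv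

theorem derivative_rescale_exp {A : Type*} [CommRing A] [Algebra ℚ A] (a : A) :
    d⁄dX A (rescale a (exp A)) = C a * rescale a (exp A) := by
  ext n
  have h := congrArg (coeff n) (derivative_exp A)
  rw [coeff_derivative] at h
  rw [coeff_derivative, coeff_rescale, mul_assoc, h, coeff_C_mul, coeff_rescale, pow_succ]
  ring

noncomputable def expSubOneDivX : ℚ⟦X⟧ := mk fun n => 1 / (n + 1)!

theorem X_mul_expSubOneDivX : X * expSubOneDivX = exp ℚ - 1 := by
  ext (_ | n) <;> simp [expSubOneDivX, coeff_succ_X_mul]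

theorem X_mul_derivative_expSubOneDivX :
    X * d⁄dX ℚ expSubOneDivX = exp ℚ - expSubOneDivX := by
  ext (_ | n)
  · simp [expSubOneDivX]
  · rw [coeff_succ_X_mul, coeff_derivative, map_sub, coeff_exp]
    simp only [expSubOneDivX, coeff_mk, factorial_succ]
    push_cast
    field_simp
    ring

theorem mk_neg_one_pow_div_factorial :
    (mk fun n => (-1 : ℚ) ^ n / n !) = rescale (-1) (exp ℚ) := by
  ext n
  simp [div_eq_mul_inv]

noncomputable def descentStep (n : ℕ) : ℚ⟦X⟧ →ₗ[ℚ] ℚ⟦X⟧ :=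
  LinearMap.mulLeft ℚ (1 + (n : ℚ⟦X⟧) * exp ℚ) +
    LinearMap.mulLeft ℚ (1 - exp ℚ) ∘ₗ (d⁄dX ℚ).toLinearMap

theorem descentStep_apply (n : ℕ) (f : ℚ⟦X⟧) :
    descentStep n f = (1 + n * exp ℚ) * f + (1 - exp ℚ) * d⁄dX ℚ f := rfl

theorem descentStep_rescale_exp (n : ℕ) (a : ℚ) :
    descentStep n (rescale a (exp ℚ)) =
      C (1 + a) * rescale a (exp ℚ) + C (n - a) * rescale (a + 1) (exp ℚ) := by
  have hexp : exp ℚ * rescale a (exp ℚ) = rescale (a + 1) (exp ℚ) := by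
    rw [add_comm, ← exp_mul_exp_eq_exp_add, rescale_one, RingHom.id_apply]
  rw [descentStep_apply, derivative_rescale_exp, ← hexp, map_add, map_sub, map_one, map_natCast]
  ring

noncomputable def descentClosedForm (n : ℕ) : ℚ⟦X⟧ :=
  n ! * (expSubOneDivX ^ (n + 1) * rescale (-1) (exp ℚ))

theorem descentStep_descentClosedForm (n : ℕ) :
    descentStep n (descentClosedForm n) = descentClosedForm (n + 1) := by
  rw [descentClosedForm, descentClosedForm]
  set F := expSubOneDivX
  set E := rescale (-1 : ℚ) (exp ℚ)
  have hE : d⁄dX ℚ E = -E := by rw [derivative_rescale_exp, map_neg, map_one, neg_one_mul]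
  rw [descentStep_apply, Derivation.leibniz, Derivation.leibniz, Derivation.leibniz_pow,
    Derivation.map_natCast, hE, factorial_succ]
  simp only [smul_eq_mul, nsmul_eq_mul, Nat.add_sub_cancel, Nat.cast_mul, Nat.cast_succ]
  linear_combination ((n + 1 : ℚ⟦X⟧) * n ! * F ^ n * E * d⁄dX ℚ F) * X_mul_expSubOneDivX
    - ((n + 1 : ℚ⟦X⟧) * n ! * F ^ (n + 1) * E) * X_mul_derivative_expSubOneDivX

theorem X_pow_dvd_descentStep {n : ℕ} {f : ℚ⟦X⟧} (hf : X ^ (n + 1) ∣ f) :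
    X ^ (n + 2) ∣ descentStep n f := by
  obtain ⟨g, rfl⟩ := hf
  obtain ⟨h, hh⟩ : X ∣ 1 + (n : ℚ⟦X⟧) * exp ℚ - ((n : ℚ⟦X⟧) + 1) * expSubOneDivX := by
    rw [X_dvd_iff]
    simp [expSubOneDivX]
    ring
  refine ⟨h * g - expSubOneDivX * d⁄dX ℚ g, ?_⟩
  rw [descentStep_apply, Derivation.leibniz, Derivation.leibniz_pow, derivative_X]
  simp only [smul_eq_mul, Nat.add_sub_cancel, mul_one]
  linear_combination (X ^ (n + 1) * g) * hh +
    (((n : ℚ⟦X⟧) + 1) * X ^ n * g + X ^ (n + 1) * d⁄dX ℚ g) * X_mul_expSubOneDivX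

namespace Equiv.Perm
variable {n : ℕ}

def IsDescent (σ : Perm (Fin n)) (i : Fin n) : Prop :=
  ∃ h : (i : ℕ) + 1 < n, σ ⟨(i : ℕ) + 1, h⟩ < σ i

instance (σ : Perm (Fin n)) : DecidablePred σ.IsDescent := fun i => by
  unfold IsDescent; infer_instance

theorem descentCount_eq_card (σ : Perm (Fin n)) : descentCount σ = #{i | σ.IsDescent i} := rfl

theorem descentCount_lt (σ : Perm (Fin (n + 1))) : descentCount σ < n + 1 := by
  rw [descentCount_eq_card]
  have hlast : Fin.last n ∉ ({i | σ.IsDescent i} : Finset _) := by simp [IsDescent]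
  exact (card_lt_univ_of_notMem hlast).trans_eq (Fintype.card_fin _)

/-- `insertMax p τ` puts `n` at position `p` and the values of `τ`, in order, at the other
positions. -/
def insertMax (p : Fin (n + 1)) (τ : Perm (Fin n)) : Perm (Fin (n + 1)) :=
  ((finSuccEquiv' p).trans τ.optionCongr).trans (finSuccEquiv' (Fin.last n)).symm

@[simp] theorem insertMax_apply_self (p : Fin (n + 1)) (τ : Perm (Fin n)) :
    insertMax p τ p = Fin.last n := by
  simp [insertMax]

@[simp] theorem insertMax_apply_succAbove (p : Fin (n + 1)) (τ : Perm (Fin n)) (j : Fin n) :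
    insertMax p τ (p.succAbove j) = (τ j).castSucc := by
  simp [insertMax, Fin.succAbove_last]

theorem insertMax_bijective :
    Function.Bijective fun x : Fin (n + 1) × Perm (Fin n) => insertMax x.1 x.2 := by
  rw [Fintype.bijective_iff_injective_and_card]
  refine ⟨?_, by simp [Fintype.card_perm, Nat.factorial_succ]⟩
  rintro ⟨p, τ⟩ ⟨q, ρ⟩ h
  simp only at h
  obtain rfl : p = q := (insertMax q ρ).injective <| by
    rw [insertMax_apply_self, ← h, insertMax_apply_self]
  refine Prod.ext rfl (Equiv.ext fun j => Fin.castSucc_injective n ?_)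
  simpa using DFunLike.congr_fun h (p.succAbove j)

theorem isDescent_insertMax_self (p : Fin (n + 1)) (τ : Perm (Fin n)) :
    (insertMax p τ).IsDescent p ↔ p ≠ Fin.last n := by
  refine ⟨fun ⟨h, _⟩ hp => by simp [hp] at h, fun hp => ?_⟩
  have h : (p : ℕ) + 1 < n + 1 := by simpa using Fin.val_lt_last hp
  refine ⟨h, ?_⟩
  rw [insertMax_apply_self]
  refine (Fin.le_last _).lt_of_ne fun hlast => ?_
  rw [← insertMax_apply_self p τ, (insertMax p τ).injective.eq_iff, Fin.ext_iff] at hlast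
  simp at hlast

theorem isDescent_insertMax_succAbove (p : Fin (n + 1)) (τ : Perm (Fin n)) (j : Fin n) :
    (insertMax p τ).IsDescent (p.succAbove j) ↔ τ.IsDescent j ∧ j.succ ≠ p := by
  have hval : ∀ i : Fin n, (p.succAbove i : ℕ) = if (i : ℕ) < p then (i : ℕ) else i + 1 := by
    intro i
    split_ifs with h
    · rw [Fin.succAbove_of_castSucc_lt _ _ (by simpa [Fin.lt_def] using h), Fin.val_castSucc]
    · rw [Fin.succAbove_of_le_castSucc _ _ (by simpa [Fin.le_def] using h), Fin.val_succ]
  by_cases hjp : j.succ = p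
  · subst hjp
    simp only [ne_eq, not_true_eq_false, and_false, iff_false]
    rintro ⟨h, hlt⟩
    have hnext : (⟨(j.succ.succAbove j : ℕ) + 1, h⟩ : Fin (n + 1)) = j.succ := Fin.ext (by simp)
    rw [hnext, insertMax_apply_self] at hlt
    exact (Fin.le_last _).not_gt hlt
  have hjp_val : (j : ℕ) + 1 ≠ p := fun h => hjp (Fin.ext (by simpa using h))
  have hlen : (p.succAbove j : ℕ) + 1 < n + 1 ↔ (j : ℕ) + 1 < n := by
    rw [hval]; have := p.isLt; split_ifs <;> omega
  have hnext : ∀ h hj, (⟨(p.succAbove j : ℕ) + 1, h⟩ : Fin (n + 1)) = p.succAbove ⟨j + 1, hj⟩ :=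
    fun _ _ => Fin.ext <| by simp only [hval]; split_ifs <;> omega
  rw [and_iff_left hjp]
  constructor
  · rintro ⟨h, hlt⟩
    refine ⟨hlen.1 h, ?_⟩
    rwa [hnext h (hlen.1 h), insertMax_apply_succAbove, insertMax_apply_succAbove,
      Fin.castSucc_lt_castSucc_iff] at hlt
  · rintro ⟨hj, hlt⟩
    refine ⟨hlen.2 hj, ?_⟩
    rwa [hnext (hlen.2 hj) hj, insertMax_apply_succAbove, insertMax_apply_succAbove,
      Fin.castSucc_lt_castSucc_iff]

/-- The slots where inserting the maximum creates no new descent: right after a descent, and at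
the end. -/
def descentSlots (τ : Perm (Fin n)) : Finset (Fin (n + 1)) :=
  insert (Fin.last n) (({i | τ.IsDescent i} : Finset (Fin n)).map (Fin.succEmb n))

theorem last_notMem_map_succEmb_descents (τ : Perm (Fin n)) :
    Fin.last n ∉ ({i | τ.IsDescent i} : Finset (Fin n)).map (Fin.succEmb n) := by
  simp only [mem_map, mem_filter, mem_univ, true_and, Fin.coe_succEmb, not_exists, not_and]
  rintro j ⟨h, -⟩ hj
  simp [Fin.ext_iff] at hj
  omega

theorem card_descentSlots (τ : Perm (Fin n)) : #(descentSlots τ) = descentCount τ + 1 := by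
  rw [descentSlots, card_insert_of_notMem (last_notMem_map_succEmb_descents τ), card_map,
    descentCount_eq_card]

theorem descentCount_insertMax (p : Fin (n + 1)) (τ : Perm (Fin n)) :
    descentCount (insertMax p τ) =
      if p ∈ descentSlots τ then descentCount τ else descentCount τ + 1 := by
  set D : Finset (Fin n) := {i | τ.IsDescent i}
  have hinsert : descentCount (insertMax p τ) =
      (if p = Fin.last n then 0 else 1) + #(D.filter fun j => j.succ ≠ p) := by
    rw [descentCount_eq_card, card_filter, Fin.sum_univ_succAbove _ p, card_filter, sum_filter]
    simp only [isDescent_insertMax_self, isDescent_insertMax_succAbove, ite_and, ne_eq, ite_not]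
  have hsplit : #(D.filter fun j => j.succ ≠ p) + (if p ∈ D.map (Fin.succEmb n) then 1 else 0) =
      descentCount τ := by
    rw [descentCount_eq_card, ← card_filter_add_card_filter_not (s := D) (fun j => j.succ ≠ p)]
    simp only [not_not, add_right_inj]
    have hmap : (D.filter fun j => j.succ = p).map (Fin.succEmb n) =
        (D.map (Fin.succEmb n)).filter (· = p) := by
      rw [filter_map]; rfl
    rw [← card_map, hmap, filter_eq']
    split_ifs <;> simp
  have hlast := last_notMem_map_succEmb_descents τ
  rw [hinsert, ← hsplit]
  by_cases hp : p = Fin.last n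
  · subst hp; simp [descentSlots, D, hlast]
  · by_cases hm : p ∈ D.map (Fin.succEmb n) <;> simp [descentSlots, D, hp, hm] <;> omega

end Equiv.Perm

open Equiv.Perm

noncomputable def descentEGF (n : ℕ) : ℚ⟦X⟧ :=
  ∑ σ : Perm (Fin n), rescale (descentCount σ : ℚ) (exp ℚ)

theorem sum_rescale_exp_descentCount_insertMax {n : ℕ} (τ : Perm (Fin n)) :
    ∑ p, rescale (descentCount (insertMax p τ) : ℚ) (exp ℚ) =
      descentStep n (rescale (descentCount τ : ℚ) (exp ℚ)) := by
  set d := descentCount τ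
  have hslot : ∀ p, rescale (descentCount (insertMax p τ) : ℚ) (exp ℚ) =
      rescale (d + 1 : ℚ) (exp ℚ) + if p ∈ descentSlots τ
        then rescale (d : ℚ) (exp ℚ) - rescale (d + 1 : ℚ) (exp ℚ) else 0 := by
    intro p
    rw [descentCount_insertMax]
    split_ifs <;> simp [d]
  rw [sum_congr rfl fun p _ => hslot p, sum_add_distrib, sum_ite_mem, univ_inter, sum_const,
    sum_const, card_descentSlots, Finset.card_univ, Fintype.card_fin, descentStep_rescale_exp]
  simp only [nsmul_eq_mul, map_add, map_sub, map_one, map_natCast]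
  push_cast
  ring

theorem descentEGF_succ (n : ℕ) : descentEGF (n + 1) = descentStep n (descentEGF n) := by
  rw [descentEGF, ← Fintype.sum_bijective _ insertMax_bijective _ _ fun _ => rfl,
    Fintype.sum_prod_type, sum_comm, descentEGF, map_sum]
  exact sum_congr rfl fun τ _ => sum_rescale_exp_descentCount_insertMax τ

theorem X_pow_dvd_descentEGF_sub (n : ℕ) :
    X ^ (n + 1) ∣ descentEGF n - descentClosedForm n := by
  induction n with
  | zero =>
    have hconst (a : ℚ) : constantCoeff (rescale a (exp ℚ)) = 1 := by
      rw [← coeff_zero_eq_constantCoeff_apply, coeff_rescale]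
      simp
    rw [zero_add, pow_one, X_dvd_iff]
    simp [descentEGF, descentClosedForm, expSubOneDivX, hconst]
  | succ n ih =>
    rw [descentEGF_succ, ← descentStep_descentClosedForm, ← map_sub]
    exact X_pow_dvd_descentStep ih

theorem coeff_descentEGF (n k : ℕ) :
    coeff k (descentEGF n) = (∑ σ : Perm (Fin n), (descentCount σ : ℚ) ^ k) / k ! := by
  simp [descentEGF, coeff_rescale, div_eq_mul_inv, sum_mul]

theorem sum_range_eulerian_mul {R : Type*} [Semiring R] (n : ℕ) (f : ℕ → R) :
    ∑ i ∈ range (n + 1), (eulerian (n + 1) i : R) * f i =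
      ∑ σ : Perm (Fin (n + 1)), f (descentCount σ) := by
  rw [← sum_fiberwise_of_maps_to (g := descentCount) (t := range (n + 1))
    fun σ _ => mem_range.2 (descentCount_lt σ)]
  refine sum_congr rfl fun i _ => ?_
  rw [sum_congr rfl fun σ hσ => by rw [(mem_filter.1 hσ).2], sum_const, nsmul_eq_mul]
  rfl

/-- For `d ≥ k − 1`, the `k`-th moment of the descent statistic on
permutations of `{1,…,d+1}` is `k!` times the coefficient of `z^k` in
`((e^z − 1)/z)^{d+2} · e^{−z}`. -/
theorem stmt5 (k d : ℕ) (h : k ≤ d + 1) :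
    (∑ i ∈ Finset.range (d + 1), (eulerian (d + 1) i : ℚ) * (i : ℚ) ^ k)
      = (Nat.factorial (d + 1) : ℚ) * (Nat.factorial k : ℚ) *
        PowerSeries.coeff (R := ℚ) k
          ((PowerSeries.mk fun n => (1 : ℚ) / (Nat.factorial (n + 1) : ℚ)) ^ (d + 2) *
            PowerSeries.mk fun n => (-1 : ℚ) ^ n / (Nat.factorial n : ℚ)) := by
  have hcoeff := X_pow_dvd_iff.1 (X_pow_dvd_descentEGF_sub (d + 1)) k (by omega)
  rw [map_sub, sub_eq_zero, coeff_descentEGF, descentClosedForm, ← map_natCast (C (R := ℚ)),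
    coeff_C_mul,
    div_eq_iff (by positivity)] at hcoeff
  rw [sum_range_eulerian_mul d fun i => (i : ℚ) ^ k, hcoeff, mk_neg_one_pow_div_factorial]
  unfold expSubOneDivX
  ring
end

section
/- Let M be a loopless matroid of rank d+1 on a finite ground set, and let J ⊆ J' be two subsets of {1,...,d}. Then N_J(M) · U_{J'} ≤ N_{J'}(M) · U_J, where for a subset K ⊆ {1,...,d} with block sizes n_1, ..., n_{m+1}, U_K = (d+1)! · n_{m+1} / (n_1! · n_2! ⋯ n_{m+1}!) is the number of such chains of flats in the Boolean matroid of rank d+1. -/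
open Finset Polynomial

/-- Block sizes of an index set `J ⊆,{1,…,d}`: differences of consecutive elements of
`{0} ∪ J ∪ {d+2}` in increasing order. -/
def blockSizes (d : ℕ) (J : Finset ℕ) : List ℕ :=
  let L := (insert 0 (insert (d + 2) J)).sort (· ≤ ·)
  L.tail.zipWith (· - ·) L

/-- The rank of a set in a matroid: the supremum of cardinalities of independent subsets. -/
noncomputable def mrank {α : Type*} (M : Matroid α) (X : Set α) : ℕ :=
  sSup {n : ℕ | ∃ I, M.Indep I ∧ I ⊆ X ∧ I.ncard = n}

/-- A loopless matroid: every singleton of the ground set is independent. -/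
def MLoopless {α : Type*} (M : Matroid α) : Prop := ∀ e ∈ M.E, M.Indep {e}

/-- `flagCount M J` : the number of chains of flats of `M` whose ranks are exactly
the elements of `J`, in increasing order. -/
noncomputable def flagCount {α : Type*} (M : Matroid α) (J : Finset ℕ) : ℕ :=
  Nat.card {F : J → Set α // StrictMono F ∧ ∀ j : J, M.IsFlat (F j) ∧ mrank M (F j) = (j : ℕ)}

/-- The Chow polynomial of a matroid of rank `d+1`, via the Feichtner–Yuzvinsky
flag formula. -/
noncomputable def chowPoly {α : Type*} (M : Matroid α) (d : ℕ) : Polynomial ℝ :=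
  ∑ J ∈ (Finset.Icc 1 d).powerset,
    (flagCount M J : ℝ) •
      ((X : Polynomial ℝ) ^ J.card *
        ((blockSizes d J).map (fun n => ∑ j ∈ Finset.range (n - 1), (X : Polynomial ℝ) ^ j)).prod)

/-- `U_J = (d+1)! · n_{m+1} / (n_1! ⋯ n_{m+1}!)`, the number of chains of flats of ranks `J`
in the Boolean matroid of rank `d+1`. -/
noncomputable def boolFlagCount (d : ℕ) (J : Finset ℕ) : ℚ :=
  (Nat.factorial (d + 1) : ℚ) * ((blockSizes d J).getLastD 1 : ℚ) /
    (((blockSizes d J).map Nat.factorial).prod : ℚ)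


/-!
Inserting a rank `j` into `J`, between its neighbours `a < j < b` in `{0} ∪ J ∪ {d+2}`, splits
the block `b - a` into `j - a` and `b - j`, so it multiplies `U_J` by `C(b' - a, j - a)` with
`b' = min b (d+1)` (the last block enters `U_J` as `n/n! = 1/(n-1)!`). In any matroid, a chain of
ranks `J` extends to a chain of ranks `J ∪ {j}` in at least that many ways: `b'` is the rank
of the flat `F_b` of the chain at `b` (the ground set if `b = d+2`), and if `I_a ⊆ I_b` are
nested bases of `F_a ⊆ F_b`, the closures of `I_a ∪ T`, for the `(j-a)`-subsets `T` of
`I_b \ I_a`, are distinct flats of rank `j` between `F_a` and `F_b`. Hence `N_J / U_J`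
increases with `J`.
-/

theorem List.exists_eq_append_cons_cons_lt_le {α : Type*} [LinearOrder α] {L : List α}
    {x y j : α} (hL : L.Pairwise (· ≤ ·)) (hx : x ∈ L) (hy : y ∈ L) (hxj : x < j)
    (hjy : j ≤ y) :
    ∃ l₁ a b l₂, L = l₁ ++ a :: b :: l₂ ∧ a < j ∧ j ≤ b := by
  induction L generalizing x with
  | nil => simp at hx
  | cons u t ih =>
    obtain ⟨hu, ht⟩ := List.pairwise_cons.1 hL
    have hux : u ≤ x := by
      rcases List.mem_cons.1 hx with rfl | hx
      exacts [le_rfl, hu x hx]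
    have hyt : y ∈ t := (List.mem_cons.1 hy).resolve_left (by rintro rfl; order)
    cases t with
    | nil => simp at hyt
    | cons v t =>
      by_cases hjv : j ≤ v
      · exact ⟨[], u, v, t, rfl, by order, hjv⟩
      · obtain ⟨l₁, a, b, l₂, h, haj, hjb⟩ := ih ht List.mem_cons_self hyt (not_le.1 hjv)
        exact ⟨u :: l₁, a, b, l₂, by rw [h]; rfl, haj, hjb⟩

theorem List.le_or_le_of_mem_append_cons_cons {α : Type*} [LinearOrder α] {l₁ l₂ : List α}
    {a b x : α} (hl : (l₁ ++ a :: b :: l₂).Pairwise (· < ·))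
    (hx : x ∈ l₁ ++ a :: b :: l₂) :
    x ≤ a ∨ b ≤ x := by
  simp only [List.pairwise_append, List.pairwise_cons, List.mem_cons] at hl
  simp only [List.mem_append, List.mem_cons] at hx
  rcases hx with hx | rfl | rfl | hx
  · exact .inl (hl.2.2 x hx a (.inl rfl)).le
  · exact .inl le_rfl
  · exact .inr le_rfl
  · exact .inr (hl.2.1.2.1 x hx).le

def successiveDiffs (l : List ℕ) : List ℕ := l.tail.zipWith (· - ·) l

@[simp] theorem successiveDiffs_singleton (x : ℕ) : successiveDiffs [x] = [] := rfl

@[simp] theorem successiveDiffs_cons_cons (x y : ℕ) (l : List ℕ) :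
    successiveDiffs (x :: y :: l) = (y - x) :: successiveDiffs (y :: l) := rfl

theorem successiveDiffs_append_cons (xs : List ℕ) (y : ℕ) (ys : List ℕ) :
    successiveDiffs (xs ++ y :: ys) = successiveDiffs (xs ++ [y]) ++ successiveDiffs (y :: ys) := by
  induction xs with
  | nil => simp
  | cons x xs ih => cases xs <;> simp_all

theorem pos_of_mem_successiveDiffs {l : List ℕ} (hl : l.Pairwise (· < ·)) {x : ℕ}
    (hx : x ∈ successiveDiffs l) : 0 < x := by
  induction l with
  | nil => simp [successiveDiffs] at hx
  | cons u t ih =>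
    cases t with
    | nil => simp at hx
    | cons v t =>
      obtain ⟨hu, ht⟩ := List.pairwise_cons.1 hl
      rcases List.mem_cons.1 (successiveDiffs_cons_cons u v t ▸ hx) with rfl | hx
      · exact Nat.sub_pos_of_lt (hu v List.mem_cons_self)
      · exact ih ht hx

theorem blockSizes_eq_successiveDiffs (d : ℕ) (J : Finset ℕ) :
    blockSizes d J = successiveDiffs (insert 0 (insert (d + 2) J)).sort := rfl

def blockWeight (ns : List ℕ) : ℚ := ns.getLastD 1 / (ns.map Nat.factorial).prod

theorem boolFlagCount_eq_mul_blockWeight (d : ℕ) (J : Finset ℕ) :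
    boolFlagCount d J = (d + 1).factorial * blockWeight (blockSizes d J) :=
  mul_div_assoc _ _ _

theorem blockWeight_pos {ns : List ℕ} (hns : ∀ n ∈ ns, 0 < n) : 0 < blockWeight ns := by
  have hlast : 0 < ns.getLastD 1 := by
    rw [List.getLastD_eq_getLast?]
    cases h : ns.getLast? with
    | none => exact Nat.one_pos
    | some n => exact hns n (List.mem_of_getLast? h)
  unfold blockWeight
  have : 0 < (ns.map Nat.factorial).prod := List.prod_pos (by simp [Nat.factorial_pos])
  positivity

theorem boolFlagCount_pos (d : ℕ) (J : Finset ℕ) : 0 < boolFlagCount d J := by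
  rw [boolFlagCount_eq_mul_blockWeight]
  exact mul_pos (by positivity)
    (blockWeight_pos fun _ => pos_of_mem_successiveDiffs (sortedLT_sort _).pairwise)

theorem blockWeight_split {xs ys : List ℕ} (hys : ys ≠ []) (p q : ℕ) :
    blockWeight (xs ++ p :: q :: ys) = (p + q).choose p * blockWeight (xs ++ (p + q) :: ys) := by
  obtain ⟨y, ys, rfl⟩ := List.exists_cons_of_ne_nil hys
  simp only [blockWeight, List.getLastD_eq_getLast?, List.getLast?_append,
    List.getLast?_cons_cons, Option.getD_or, List.map_append, List.prod_append, List.map_cons,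
    List.prod_cons, Nat.cast_mul, Nat.cast_add_choose]
  field_simp

theorem blockWeight_split_last (xs : List ℕ) (p q : ℕ) :
    blockWeight (xs ++ [p, q + 1]) = (p + q).choose p * blockWeight (xs ++ [p + q + 1]) := by
  simp only [blockWeight, List.getLastD_eq_getLast?, List.getLast?_append,
    List.getLast?_cons_cons, List.getLast?_singleton, Option.some_or, Option.getD_some,
    List.map_append, List.prod_append, List.map_cons, List.map_nil, List.prod_cons, List.prod_nil,
    mul_one, Nat.factorial_succ, Nat.cast_mul, Nat.cast_add, Nat.cast_one, Nat.cast_add_choose]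
  field_simp

theorem Finset.sort_insert_of_sort_eq {α : Type*} [LinearOrder α] {s : Finset α}
    {l₁ l₂ : List α} {a b j : α} (h : s.sort = l₁ ++ a :: b :: l₂) (haj : a < j)
    (hjb : j < b) :
    (insert j s).sort = l₁ ++ a :: j :: b :: l₂ := by
  have hs := s.sortedLT_sort
  rw [h, List.sortedLT_iff_isChain] at hs
  refine (sortedLT_sort _).eq_of_mem_iff ?_ fun x => ?_
  · rw [List.sortedLT_iff_isChain]
    simp_all
  · rw [mem_sort, mem_insert, ← mem_sort (· ≤ ·), h]
    simp only [List.mem_append, List.mem_cons]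
    tauto

theorem boolFlagCount_insert {d j a b : ℕ} {J : Finset ℕ} {l₁ l₂ : List ℕ}
    (hJ : J ⊆ Icc 1 d) (hL : (insert 0 (insert (d + 2) J)).sort = l₁ ++ a :: b :: l₂)
    (haj : a < j) (hjb : j < b) :
    boolFlagCount d (insert j J) = (min b (d + 1) - a).choose (j - a) * boolFlagCount d J := by
  have hL' : (insert 0 (insert (d + 2) (insert j J))).sort = l₁ ++ a :: j :: b :: l₂ := by
    rw [insert_comm (d + 2), insert_comm 0]
    exact Finset.sort_insert_of_sort_eq hL haj hjb
  have hsorted := (sortedLT_sort (insert 0 (insert (d + 2) J))).pairwise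
  have hmem : ∀ x ∈ l₁ ++ a :: b :: l₂, x ≤ d + 2 := fun x hx => by
    rw [← hL, mem_sort] at hx
    simp only [mem_insert] at hx
    rcases hx with rfl | rfl | hx
    · omega
    · omega
    · exact (mem_Icc.1 (hJ hx)).2.trans (by omega)
  have htop : d + 2 ∈ l₁ ++ a :: b :: l₂ := by simp [← hL]
  rw [hL] at hsorted
  rw [boolFlagCount_eq_mul_blockWeight, boolFlagCount_eq_mul_blockWeight,
    blockSizes_eq_successiveDiffs, blockSizes_eq_successiveDiffs, hL, hL',
    successiveDiffs_append_cons l₁ a (b :: l₂),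
    successiveDiffs_append_cons l₁ a (j :: b :: l₂), successiveDiffs_cons_cons,
    successiveDiffs_cons_cons, successiveDiffs_cons_cons, show b - a = j - a + (b - j) by omega,
    mul_left_comm]
  congr 1
  simp only [List.pairwise_append, List.pairwise_cons, List.mem_cons] at hsorted
  obtain ⟨-, ⟨-, hbl₂, -⟩, hl₁⟩ := hsorted
  have hbd := hmem b (by simp)
  cases l₂ with
  | nil =>
    have hb : b = d + 2 := by
      simp only [List.mem_append, List.mem_cons, List.not_mem_nil, or_false] at htop
      rcases htop with h | h | h
      · have := hl₁ _ h b (by simp)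
        omega
      all_goals omega
    obtain ⟨q, hq⟩ : ∃ q, b - j = q + 1 := ⟨d + 1 - j, by omega⟩
    rw [hq, successiveDiffs_singleton, ← add_assoc, blockWeight_split_last,
      show min b (d + 1) - a = j - a + q by omega]
  | cons c l₂ =>
    have hbc := hbl₂ c (by simp)
    have hcd := hmem c (by simp)
    rw [blockWeight_split (by simp), show min b (d + 1) - a = j - a + (b - j) by omega]

section Flags

variable {α : Type*} {M : Matroid α}

theorem mrank_eq_ncard_of_isBasis {I X : Set α} (hI : M.IsBasis I X) (hIfin : I.Finite) :
    mrank M X = I.ncard := by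
  have hle : ∀ n ∈ {n | ∃ K, M.Indep K ∧ K ⊆ X ∧ K.ncard = n}, n ≤ I.ncard := by
    rintro _ ⟨K, hK, hKX, rfl⟩
    exact ENat.toNat_le_toNat ((hK.encard_le_eRk_of_subset hKX).trans_eq hI.encard_eq_eRk.symm)
      hIfin.encard_lt_top.ne
  exact le_antisymm (csSup_le ⟨_, ∅, M.empty_indep, Set.empty_subset X, rfl⟩ hle)
    (le_csSup ⟨_, hle⟩ ⟨I, hI.indep, hI.subset, rfl⟩)

theorem mrank_closure_of_indep [M.RankFinite] {I : Set α} (hI : M.Indep I) :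
    mrank M (M.closure I) = I.ncard :=
  mrank_eq_ncard_of_isBasis hI.isBasis_closure hI.finite

theorem choose_le_ncard_flats_between [M.Finite] {F₁ F₂ : Set α} {k : ℕ}
    (hF₂ : M.IsFlat F₂) (h₁₂ : F₁ ⊆ F₂) (hk : mrank M F₁ ≤ k) :
    (mrank M F₂ - mrank M F₁).choose (k - mrank M F₁) ≤
      {G | M.IsFlat G ∧ F₁ ⊆ G ∧ G ⊆ F₂ ∧ mrank M G = k}.ncard := by
  classical
  obtain ⟨I₁, hI₁⟩ := M.exists_isBasis F₁ (h₁₂.trans hF₂.subset_ground)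
  obtain ⟨I₂, hI₂, hI₁₂⟩ :=
    hI₁.indep.subset_isBasis_of_subset (hI₁.subset.trans h₁₂) hF₂.subset_ground
  have hI₂fin := hI₂.indep.finite
  have hI₁fin := hI₂fin.subset hI₁₂
  rw [mrank_eq_ncard_of_isBasis hI₁ hI₁fin] at hk ⊢
  rw [mrank_eq_ncard_of_isBasis hI₂ hI₂fin]
  set Δ := hI₂fin.toFinset \ hI₁fin.toFinset
  have hΔ : Δ.card = I₂.ncard - I₁.ncard := by
    rw [card_sdiff_of_subset (by simpa using hI₁₂), Set.ncard_eq_toFinset_card _ hI₂fin,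
      Set.ncard_eq_toFinset_card _ hI₁fin]
  rw [← hΔ, ← card_powersetCard, ← Set.ncard_coe_finset]
  have hsplit :
      ∀ T ∈ Δ.powersetCard (k - I₁.ncard), Disjoint I₁ T ∧ I₁ ∪ T ⊆ I₂ := by
    intro T hT
    have hTΔ := (mem_powersetCard.1 hT).1
    refine ⟨Set.disjoint_left.2 fun x hx hxT => ?_, Set.union_subset hI₁₂ fun x hxT => ?_⟩
    · simpa [Δ, hx] using hTΔ hxT
    · simpa [Δ] using (mem_sdiff.1 (hTΔ hxT)).1
  refine Set.ncard_le_ncard_of_injOn (fun T => M.closure (I₁ ∪ T)) ?_ ?_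
    ((M.ground_finite.finite_subsets).subset fun G hG => hG.2.2.1.trans hF₂.subset_ground)
  · intro T hT
    obtain ⟨hdisj, hsub⟩ := hsplit T hT
    have hind := hI₂.indep.subset hsub
    refine ⟨M.isFlat_closure _,
      hI₁.subset_closure.trans (M.closure_subset_closure Set.subset_union_left), ?_, ?_⟩
    · rw [← hF₂.closure, ← hI₂.closure_eq_closure]
      exact M.closure_subset_closure hsub
    · rw [mrank_closure_of_indep hind, Set.ncard_union_eq hdisj hI₁fin T.finite_toSet,
        Set.ncard_coe_finset, (mem_powersetCard.1 hT).2]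
      omega
  · intro T hT T' hT' h
    obtain ⟨hdisj, hsub⟩ := hsplit T hT
    obtain ⟨hdisj', hsub'⟩ := hsplit T' hT'
    have h' : I₁ ∪ T = I₁ ∪ T' := by
      rw [← hI₂.indep.closure_inter_eq_self_of_subset hsub,
        ← hI₂.indep.closure_inter_eq_self_of_subset hsub']
      exact congrArg (· ∩ I₂) h
    apply Finset.coe_injective
    rw [← hdisj.sdiff_eq_right, ← hdisj'.sdiff_eq_right, ← Set.union_sdiff_left, h',
      Set.union_sdiff_left]

def IsFlagChain (M : Matroid α) (J : Finset ℕ) (F : J → Set α) : Prop :=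
  StrictMono F ∧ ∀ j : J, M.IsFlat (F j) ∧ mrank M (F j) = j

theorem flagCount_eq_card (M : Matroid α) (J : Finset ℕ) :
    flagCount M J = Nat.card {F // IsFlagChain M J F} := rfl

instance [M.Finite] {J : Finset ℕ} : Finite {F // IsFlagChain M J F} :=
  ((Set.Finite.pi (t := fun _ : J => M.E.powerset) fun _ => M.ground_finite.finite_subsets).subset
    fun _ hF j _ => (hF.2 j).1.subset_ground).to_subtype

theorem isFlagChain_iff_monotone {J : Finset ℕ} {F : J → Set α} :
    IsFlagChain M J F ↔ Monotone F ∧ ∀ j : J, M.IsFlat (F j) ∧ mrank M (F j) = j :=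
  ⟨fun h => ⟨h.1.monotone, h.2⟩, fun h => ⟨h.1.strictMono_of_injective fun x y hxy =>
    Subtype.ext <| by rw [← (h.2 x).2, ← (h.2 y).2, hxy], h.2⟩⟩

def extendFlag {J : Finset ℕ} (F : J → Set α) (j : ℕ) (G : Set α) :
    ↥(insert j J) → Set α :=
  fun k => if h : (k : ℕ) ∈ J then F ⟨k, h⟩ else G

theorem extendFlag_of_mem {J : Finset ℕ} (F : J → Set α) (j : ℕ) (G : Set α) (x : J) :
    extendFlag F j G ⟨x, mem_insert_of_mem x.2⟩ = F x :=
  dif_pos x.2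

theorem extendFlag_self {J : Finset ℕ} {j : ℕ} (hj : j ∉ J) (F : J → Set α) (G : Set α) :
    extendFlag F j G ⟨j, mem_insert_self j J⟩ = G :=
  dif_neg hj

theorem IsFlagChain.extendFlag {J : Finset ℕ} {F : J → Set α} {j : ℕ} {G : Set α}
    (hF : IsFlagChain M J F) (hj : j ∉ J) (hG : M.IsFlat G) (hGj : mrank M G = j)
    (hlow : ∀ x : J, (x : ℕ) < j → F x ⊆ G) (hup : ∀ y : J, j < y → G ⊆ F y) :
    IsFlagChain M (insert j J) (extendFlag F j G) := by
  have hne : ∀ x : J, (x : ℕ) ≠ j := fun x hx => hj (hx ▸ x.2)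
  have hval : ∀ k : ↥(insert j J), (k : ℕ) ∉ J → (k : ℕ) = j := fun k hk =>
    (mem_insert.1 k.2).resolve_right hk
  refine isFlagChain_iff_monotone.2 ⟨fun k l hkl => ?_, fun k => ?_⟩ <;>
    unfold _root_.extendFlag
  · split_ifs with hk hl hl
    · exact hF.1.monotone hkl
    · have hkl : (k : ℕ) ≤ l := hkl
      exact hlow _ (lt_of_le_of_ne (hkl.trans_eq (hval l hl)) (hne ⟨k, hk⟩))
    · have hkl : (k : ℕ) ≤ l := hkl
      exact hup _ (lt_of_le_of_ne ((hval k hk).symm.trans_le hkl) (hne ⟨l, hl⟩).symm)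
    · exact le_rfl
  · split_ifs with hk
    · exact hF.2 _
    · exact ⟨hG, hGj.trans (hval k hk).symm⟩

theorem IsFlagChain.exists_flats_between [M.RankFinite] {d a b : ℕ} {J : Finset ℕ}
    {F : J → Set α} (hF : IsFlagChain M J F) (hrk : mrank M M.E = d + 1) (hJ : J ⊆ Icc 1 d)
    (ha : a ∈ insert 0 J) (hb : b ∈ insert (d + 2) J) (hab : a ≤ b)
    (hgap : ∀ x ∈ J, x ≤ a ∨ b ≤ x) :
    ∃ F₁ F₂, M.IsFlat F₂ ∧ F₁ ⊆ F₂ ∧ mrank M F₁ = a ∧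
      mrank M F₂ = min b (d + 1) ∧ (∀ x : J, (x : ℕ) < b → F x ⊆ F₁) ∧
      (∀ y : J, a < y → F₂ ⊆ F y) := by
  have hmono := hF.1.monotone
  have hJd : ∀ x : J, 1 ≤ (x : ℕ) ∧ (x : ℕ) ≤ d := fun x => mem_Icc.1 (hJ x.2)
  refine ⟨if h : a ∈ J then F ⟨a, h⟩ else M.closure ∅,
    if h : b ∈ J then F ⟨b, h⟩ else M.E, ?_, ?_, ?_, ?_, fun x hx => ?_, fun y hy => ?_⟩
  · split_ifs
    exacts [(hF.2 _).1, M.ground_isFlat]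
  · split_ifs with ha' hb'
    · exact hmono (show (⟨a, ha'⟩ : J) ≤ ⟨b, hb'⟩ from hab)
    · exact (hF.2 _).1.subset_ground
    · exact (hF.2 _).1.loops_subset
    · exact M.closure_subset_ground ∅
  · split_ifs with ha'
    · exact (hF.2 _).2
    · rw [mrank_closure_of_indep M.empty_indep, Set.ncard_empty,
        (mem_insert.1 ha).resolve_right ha']
  · split_ifs with hb'
    · exact (hF.2 _).2.trans (min_eq_left ((mem_Icc.1 (hJ hb')).2.trans d.le_succ)).symm
    · rw [hrk, (mem_insert.1 hb).resolve_right hb']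
      omega
  · have hxa : (x : ℕ) ≤ a := (hgap x x.2).resolve_right (by omega)
    split_ifs with ha'
    · exact hmono (show x ≤ ⟨a, ha'⟩ from hxa)
    · have := hJd x
      have := (mem_insert.1 ha).resolve_right ha'
      omega
  · have hby : b ≤ (y : ℕ) := (hgap y y.2).resolve_left (by omega)
    split_ifs with hb'
    · exact hmono (show ⟨b, hb'⟩ ≤ y from hby)
    · have := hJd y
      have := (mem_insert.1 hb).resolve_right hb'
      omega

theorem flagCount_mul_choose_le [M.Finite] {d j a b : ℕ} {J : Finset ℕ}
    (hrk : mrank M M.E = d + 1) (hJ : J ⊆ Icc 1 d) (hj : j ∉ J)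
    (ha : a ∈ insert 0 J) (hb : b ∈ insert (d + 2) J) (haj : a ≤ j) (hjb : j < b)
    (hgap : ∀ x ∈ J, x ≤ a ∨ b ≤ x) :
    flagCount M J * (min b (d + 1) - a).choose (j - a) ≤ flagCount M (insert j J) := by
  choose F₁ F₂ hF₂ h₁₂ hr₁ hr₂ hlow hup using fun F : {F // IsFlagChain M J F} =>
    F.2.exists_flats_between hrk hJ ha hb (haj.trans hjb.le) hgap
  let between (F : {F // IsFlagChain M J F}) : Set (Set α) :=
    {G | M.IsFlat G ∧ F₁ F ⊆ G ∧ G ⊆ F₂ F ∧ mrank M G = j}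
  let extend : (Σ F, between F) → {F // IsFlagChain M (insert j J) F} := fun ⟨F, G, hG⟩ =>
    ⟨extendFlag F.1 j G, F.2.extendFlag hj hG.1 hG.2.2.2
      (fun x hx => (hlow F x (hx.trans hjb)).trans hG.2.1)
      (fun y hy => hG.2.2.1.trans (hup F y (haj.trans_lt hy)))⟩
  have hinj : Function.Injective extend := by
    rintro ⟨F, G, hG⟩ ⟨F', G', hG'⟩ h
    have h' : extendFlag F.1 j G = extendFlag F'.1 j G' := congrArg Subtype.val h
    obtain rfl : F = F' := Subtype.ext <| funext fun x => by
      rw [← extendFlag_of_mem F.1 j G, h', extendFlag_of_mem]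
    obtain rfl : G = G' := by rw [← extendFlag_self hj F.1 G, h', extendFlag_self hj]
    rfl
  have : Fintype {F // IsFlagChain M J F} := Fintype.ofFinite _
  have (F : {F // IsFlagChain M J F}) : Finite (between F) :=
    (M.ground_finite.finite_subsets.subset
      fun _ hG => hG.2.2.1.trans (hF₂ F).subset_ground).to_subtype
  rw [flagCount_eq_card, flagCount_eq_card]
  calc Nat.card {F // IsFlagChain M J F} * (min b (d + 1) - a).choose (j - a)
      = ∑ _F : {F // IsFlagChain M J F}, (min b (d + 1) - a).choose (j - a) := by
        rw [sum_const, card_univ, smul_eq_mul, Nat.card_eq_fintype_card]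
    _ ≤ ∑ F, Nat.card (between F) := sum_le_sum fun F _ => by
        have := choose_le_ncard_flats_between (hF₂ F) (h₁₂ F) ((hr₁ F).trans_le haj)
        rwa [hr₁ F, hr₂ F, ← Nat.card_coe_set_eq] at this
    _ = Nat.card (Σ F, between F) := Nat.card_sigma.symm
    _ ≤ _ := Nat.card_le_card_of_injective extend hinj

theorem flagCount_mul_boolFlagCount_insert_le [M.Finite] {d j : ℕ} {J : Finset ℕ}
    (hrk : mrank M M.E = d + 1) (hJ : J ⊆ Icc 1 d) (hj : j ∈ Icc 1 d) (hjJ : j ∉ J) :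
    (flagCount M J : ℚ) * boolFlagCount d (insert j J) ≤
      flagCount M (insert j J) * boolFlagCount d J := by
  obtain ⟨hj₁, hjd⟩ := mem_Icc.1 hj
  have hsort := (insert 0 (insert (d + 2) J)).sortedLT_sort
  obtain ⟨l₁, a, b, l₂, hL, haj, hjb⟩ :=
    List.exists_eq_append_cons_cons_lt_le (pairwise_sort _ _)
      ((mem_sort _).2 (mem_insert_self 0 _))
      ((mem_sort _).2 (mem_insert_of_mem (mem_insert_self _ J)))
      (show 0 < j by omega) (show j ≤ d + 2 by omega)
  rw [hL] at hsort
  have hmem : ∀ x, x ∈ l₁ ++ a :: b :: l₂ ↔ x = 0 ∨ x = d + 2 ∨ x ∈ J := by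
    simp [← hL]
  have hjb : j < b := hjb.lt_of_ne <| by
    rintro rfl
    rcases (hmem j).1 (by simp) with h | h | h
    exacts [by omega, by omega, hjJ h]
  have ha : a ∈ insert 0 J := by
    rcases (hmem a).1 (by simp) with h | h | h
    exacts [h ▸ mem_insert_self 0 J, by omega, mem_insert_of_mem h]
  have hb : b ∈ insert (d + 2) J := by
    rcases (hmem b).1 (by simp) with h | h | h
    exacts [by omega, h ▸ mem_insert_self _ J, mem_insert_of_mem h]
  have hgap : ∀ x ∈ J, x ≤ a ∨ b ≤ x := fun x hx =>
    List.le_or_le_of_mem_append_cons_cons hsort.pairwise ((hmem x).2 (.inr (.inr hx)))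
  rw [boolFlagCount_insert hJ hL haj hjb, ← mul_assoc]
  exact mul_le_mul_of_nonneg_right
    (mod_cast flagCount_mul_choose_le hrk hJ hjJ ha hb haj.le hjb hgap) (boolFlagCount_pos d J).le

theorem flagCount_div_boolFlagCount_mono [M.Finite] {d : ℕ} {J J' : Finset ℕ}
    (hrk : mrank M M.E = d + 1) (hJ' : J' ⊆ Icc 1 d) (hJJ' : J ⊆ J') :
    (flagCount M J : ℚ) / boolFlagCount d J ≤ flagCount M J' / boolFlagCount d J' := by
  obtain ⟨S, hS, rfl⟩ : ∃ S, Disjoint J S ∧ J' = J ∪ S :=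
    ⟨J' \ J, disjoint_sdiff, (union_sdiff_of_subset hJJ').symm⟩
  clear hJJ'
  induction S using Finset.induction_on with
  | empty => simp
  | insert j S hjS ih =>
    rw [union_insert] at hJ' ⊢
    have hjJ : j ∉ J ∪ S := by
      simpa [hjS] using (disjoint_insert_right.1 hS).1
    refine (ih (disjoint_of_subset_right (subset_insert _ _) hS)
      ((subset_insert _ _).trans hJ')).trans ?_
    rw [div_le_div_iff₀ (boolFlagCount_pos _ _) (boolFlagCount_pos _ _)]
    exact flagCount_mul_boolFlagCount_insert_le hrk ((subset_insert _ _).trans hJ')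
      (hJ' (mem_insert_self _ _)) hjJ

end Flags

theorem stmt12_general {α : Type*} (d : ℕ) (M : Matroid α) (hfin : M.Finite)
    (hrk : mrank M M.E = d + 1) (J J' : Finset ℕ)
    (hJ' : J' ⊆ Finset.Icc 1 d) (hsub : J ⊆ J') :
    (flagCount M J : ℚ) * boolFlagCount d J' ≤ (flagCount M J' : ℚ) * boolFlagCount d J :=
  (div_le_div_iff₀ (boolFlagCount_pos d J) (boolFlagCount_pos d J')).1
    (flagCount_div_boolFlagCount_mono hrk hJ' hsub)

/-- Monotonicity of normalized flag counts: for `J ⊆ J' ⊆ {1,…,d}`,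
`N_J(M) · U_{J'} ≤ N_{J'}(M) · U_J`. -/
theorem stmt12 {α : Type*} (d : ℕ) (M : Matroid α) (hfin : M.Finite) (hloop : MLoopless M)
    (hrk : mrank M M.E = d + 1) (J J' : Finset ℕ)
    (hJ' : J' ⊆ Finset.Icc 1 d) (hsub : J ⊆ J') :
    (flagCount M J : ℚ) * boolFlagCount d J' ≤ (flagCount M J' : ℚ) * boolFlagCount d J :=
  stmt12_general d M hfin hrk J J' hJ' hsub
end

section
/- For every real number t ≥ 100 and every real number c with 0 < c < 1, the inequality 2ct · e^{1/(12t)} / √(8ctπ) ≤ ( 2^{2c} · (c+1)^{2c+2} / ( 3 · e^{2c+1} · (c + 1/(2t))^{2c+1} ) )^t holds. -/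
open Real

private theorem stmt16_case1 (c u E : ℝ) (hc0 : 0 < c) (hc : c ≤ 1/2) (hu1 : c < u)
    (hu2 : u ≤ c + 1/200)
    (hE1 : (2.7182818283:ℝ) < E) (hE2 : E < 2.7182818286) :
    1.026 * (3*E*u*(E*u + (1-2*c)*(2*(c+1) - E*u))) ≤ 2*(c+1)^3 := by
  have hw : E*u ≤ 2.7182818286*c + 0.0135914092 := by nlinarith
  have hw0 : 0 < E*u := by nlinarith
  nlinarith [sq_nonneg (c-1/2), sq_nonneg c, mul_pos hw0 hc0, sq_nonneg (E*u),
    mul_nonneg hw0.le (sub_nonneg.mpr hw), sq_nonneg (c-0.3)]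

private theorem stmt16_case2 (c u E : ℝ) (hc : 1/2 ≤ c) (hc1 : c < 1) (hu1 : c < u)
    (hu2 : u ≤ c + 1/200)
    (hE1 : (2.7182818283:ℝ) < E) (hE2 : E < 2.7182818286) :
    1.026 * (3*(E*u)^2*(E*u + (2-2*c)*(2*(c+1) - E*u))) ≤ 4*(c+1)^4 := by
  set W : ℝ := 2.7182818286*c + 0.0135914092 with hW
  clear_value W
  have hw : E*u ≤ W := by rw [hW]; nlinarith
  have hw0 : 0 < E*u := by nlinarith
  have h3 : (E*u)^3 ≤ W^3 := pow_le_pow_left₀ hw0.le hw 3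
  have h2 : (E*u)^2 ≤ W^2 := pow_le_pow_left₀ hw0.le hw 2
  have m3 : 0 ≤ (2*c-1) * (W^3 - (E*u)^3) := mul_nonneg (by linarith) (by linarith)
  have m2 : 0 ≤ ((4-4*c)*(c+1)) * (W^2 - (E*u)^2) :=
    mul_nonneg (mul_nonneg (by linarith) (by linarith)) (by linarith)
  have poly : 1.026 * 3 * ((2*c-1)*W^3 + (4-4*c)*(c+1)*W^2) ≤ 4*(c+1)^4 := by
    rw [hW]
    nlinarith [sq_nonneg (c-1), sq_nonneg (c-1/2),
      mul_nonneg (sub_nonneg.2 hc) (by linarith : (0:ℝ) ≤ 1 - c),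
      sq_nonneg ((c-1)*(c-1/2)), sq_nonneg ((c-1)*(c-1)),
      mul_nonneg (mul_nonneg (sub_nonneg.2 hc) (by linarith : (0:ℝ) ≤ 1 - c))
        (by linarith : (0:ℝ) ≤ 1 - c)]
  nlinarith [m3, m2, poly]

private theorem stmt16_core (c u E : ℝ) (hc0 : 0 < c) (hc1 : c < 1) (hu1 : c < u)
    (hu2 : u ≤ c + 1/200)
    (hE1 : (2.7182818283:ℝ) < E) (hE2 : E < 2.7182818286)
    (h40 : Real.exp (1/40) ≤ 1.026) :
    Real.exp (1/40) ≤ (c+1)^2 / (3 * E * u) * (2 * (c+1) / (E * u)) ^ (2*c) := by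
  have hu0 : 0 < u := lt_trans hc0 hu1
  have hE0 : (0:ℝ) < E := by linarith
  have hv0 : (0:ℝ) < c + 1 := by linarith
  have hEu : 0 < E * u := mul_pos hE0 hu0
  have hge : E * u ≤ 2 * (c+1) := by nlinarith
  obtain ⟨r, hrdef⟩ : ∃ r : ℝ, r = 2 * (c+1) / (E * u) := ⟨_, rfl⟩
  rw [← hrdef]
  have hr0 : 0 < r := by rw [hrdef]; positivity
  have hr1 : 1 ≤ r := by rw [hrdef, le_div_iff₀ hEu]; linarith
  have hbern : ∀ p : ℝ, 0 ≤ p → p ≤ 1 → r ^ p ≤ 1 + p * (r - 1) := by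
    intro p h1 h2
    have := rpow_one_add_le_one_add_mul_self (s := r - 1) (by linarith) h1 h2
    simpa using this
  rcases le_total c (1/2) with hcase | hcase
  · have hb : r ^ (1 - 2*c) ≤ 1 + (1-2*c) * (r-1) := hbern _ (by linarith) (by linarith)
    have hD0 : (0:ℝ) < 1 + (1-2*c)*(r-1) := by nlinarith
    have hrp0 : 0 < r ^ (1 - 2*c) := Real.rpow_pos_of_pos hr0 _
    have hsplit : r ^ (2*c) = r / r ^ (1 - 2*c) := by
      rw [eq_div_iff (ne_of_gt hrp0), ← Real.rpow_add hr0]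
      norm_num
    have h1 : r / (1 + (1-2*c)*(r-1)) ≤ r ^ (2*c) := by
      rw [hsplit]
      exact div_le_div_of_nonneg_left hr0.le hrp0 hb
    have hmid : Real.exp (1/40) ≤ (c+1)^2 / (3*E*u) * (r / (1 + (1-2*c)*(r-1))) := by
      refine h40.trans ?_
      have hD0' : (0:ℝ) < E*u + (1-2*c)*(2*(c+1) - E*u) := by nlinarith
      have heq : (c+1)^2 / (3*E*u) * (r / (1 + (1-2*c)*(r-1)))
          = 2*(c+1)^3 / (3*E*u*(E*u + (1-2*c)*(2*(c+1) - E*u))) := by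
        rw [hrdef] at hD0 ⊢
        field_simp
      rw [heq, le_div_iff₀ (by positivity)]
      have := stmt16_case1 c u E hc0 hcase hu1 hu2 hE1 hE2
      linarith
    calc Real.exp (1/40) ≤ (c+1)^2 / (3*E*u) * (r / (1 + (1-2*c)*(r-1))) := hmid
      _ ≤ (c+1)^2 / (3*E*u) * r ^ (2*c) := mul_le_mul_of_nonneg_left h1 (by positivity)
  · have hb : r ^ (2 - 2*c) ≤ 1 + (2-2*c) * (r-1) := hbern _ (by linarith) (by linarith)
    have hD0 : (0:ℝ) < 1 + (2-2*c)*(r-1) := by nlinarith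
    have hrp0 : 0 < r ^ (2 - 2*c) := Real.rpow_pos_of_pos hr0 _
    have hsplit : r ^ (2*c) = r^2 / r ^ (2 - 2*c) := by
      rw [eq_div_iff (ne_of_gt hrp0), ← Real.rpow_add hr0]
      norm_num
    have h1 : r^2 / (1 + (2-2*c)*(r-1)) ≤ r ^ (2*c) := by
      rw [hsplit]
      exact div_le_div_of_nonneg_left (by positivity) hrp0 hb
    have hmid : Real.exp (1/40) ≤ (c+1)^2 / (3*E*u) * (r^2 / (1 + (2-2*c)*(r-1))) := by
      refine h40.trans ?_
      have hD0' : (0:ℝ) < E*u + (2-2*c)*(2*(c+1) - E*u) := by nlinarith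
      have heq : (c+1)^2 / (3*E*u) * (r^2 / (1 + (2-2*c)*(r-1)))
          = 4*(c+1)^4 / (3*(E*u)^2*(E*u + (2-2*c)*(2*(c+1) - E*u))) := by
        rw [hrdef] at hD0 ⊢
        field_simp
        ring
      rw [heq, le_div_iff₀ (by positivity)]
      have := stmt16_case2 c u E hcase hc1 hu1 hu2 hE1 hE2
      linarith
    calc Real.exp (1/40) ≤ (c+1)^2 / (3*E*u) * (r^2 / (1 + (2-2*c)*(r-1))) := hmid
      _ ≤ (c+1)^2 / (3*E*u) * r ^ (2*c) := mul_le_mul_of_nonneg_left h1 (by positivity)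

private theorem stmt16_base_eq (c u : ℝ) (hc0 : 0 < c) (hu0 : 0 < u) :
    (2:ℝ)^(2*c) * (c+1)^(2*c+2) / (3*Real.exp (2*c+1) * u^(2*c+1))
      = (c+1)^2/(3*Real.exp 1*u) * (2*(c+1)/(Real.exp 1*u))^(2*c) := by
  have hv0 : (0:ℝ) < c + 1 := by linarith
  have hE0 : (0:ℝ) < Real.exp 1 := Real.exp_pos 1
  have e1 : (c+1) ^ (2*c+2) = (c+1) ^ (2*c) * (c+1)^2 := by
    rw [Real.rpow_add hv0, show ((2:ℝ)) = ((2:ℕ):ℝ) by norm_num, Real.rpow_natCast]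
  have e2 : u ^ (2*c+1) = u ^ (2*c) * u := by
    rw [Real.rpow_add hu0, Real.rpow_one]
  have e3 : Real.exp (2*c+1) = Real.exp 1 ^ (2*c) * Real.exp 1 := by
    rw [Real.exp_add, ← Real.exp_one_rpow (2*c)]
  have e4 : (2*(c+1)/(Real.exp 1*u)) ^ (2*c)
      = (2:ℝ) ^ (2*c) * (c+1) ^ (2*c) / (Real.exp 1 ^ (2*c) * u ^ (2*c)) := by
    rw [Real.div_rpow (by positivity) (by positivity),
      Real.mul_rpow (by norm_num) hv0.le, Real.mul_rpow hE0.le hu0.le]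
  have p2 : (0:ℝ) < (2:ℝ) ^ (2*c) := Real.rpow_pos_of_pos (by norm_num) _
  have pv : (0:ℝ) < (c+1) ^ (2*c) := Real.rpow_pos_of_pos hv0 _
  have pE : (0:ℝ) < Real.exp 1 ^ (2*c) := Real.rpow_pos_of_pos hE0 _
  have pu : (0:ℝ) < u ^ (2*c) := Real.rpow_pos_of_pos hu0 _
  rw [e1, e2, e3, e4]
  field_simp

/-- For real `t ≥ 100` and `0 < c < 1`,
`2ct·e^{1/(12t)}/√(8ctπ) ≤ (2^{2c}(c+1)^{2c+2}/(3e^{2c+1}(c+1/(2t))^{2c+1}))^t`. -/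
theorem stmt16 (t c : ℝ) (ht : 100 ≤ t) (hc0 : 0 < c) (hc1 : c < 1) :
    2 * c * t * Real.exp (1 / (12 * t)) / Real.sqrt (8 * c * t * Real.pi)
      ≤ ((2 : ℝ) ^ (2 * c) * (c + 1) ^ (2 * c + 2) /
          (3 * Real.exp (2 * c + 1) * (c + 1 / (2 * t)) ^ (2 * c + 1))) ^ t := by
  have ht0 : (0:ℝ) < t := by linarith
  have hE1 : (2.7182818283:ℝ) < Real.exp 1 := Real.exp_one_gt_d9
  have hE2 : Real.exp 1 < 2.7182818286 := Real.exp_one_lt_d9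
  -- exp (1/40) ≤ 1.026
  have h40 : Real.exp (1/40) ≤ 1.026 := by
    by_contra h
    push_neg at h
    have h1 : ((1.026:ℝ)) ^ (40:ℕ) < (Real.exp (1/40)) ^ (40:ℕ) := by
      apply pow_lt_pow_left₀ h (by norm_num)
      norm_num
    rw [← Real.exp_nat_mul] at h1
    norm_num at h1
    nlinarith [h1, hE2]
  -- left-hand side is at most exp (t/40)
  have hLHS : 2 * c * t * Real.exp (1 / (12 * t)) / Real.sqrt (8 * c * t * Real.pi)
      ≤ Real.exp (t/40) := by
    have hπ := Real.pi_gt_three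
    have hS0 : 0 < Real.sqrt (8*c*t*Real.pi) := Real.sqrt_pos.mpr (by positivity)
    have hexp12 : Real.exp (1/(12*t)) ≤ 1.026 :=
      le_trans (Real.exp_le_exp.mpr (by
        apply one_div_le_one_div_of_le <;> linarith)) h40
    have hst : 2*c*t*Real.exp (1/(12*t)) ≤ Real.sqrt t * Real.sqrt (8*c*t*Real.pi) := by
      rw [← Real.sqrt_mul ht0.le]
      have h1 : 2*c*t*Real.exp (1/(12*t)) ≤ 2.052*(c*t) := by
        nlinarith [mul_pos hc0 ht0, Real.exp_pos (1/(12*t))]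
      refine h1.trans ?_
      rw [Real.le_sqrt (by positivity) (by positivity)]
      nlinarith [mul_pos hc0 (mul_pos ht0 ht0), sq_nonneg (c*t)]
    have hLs : 2 * c * t * Real.exp (1 / (12 * t)) / Real.sqrt (8 * c * t * Real.pi)
        ≤ Real.sqrt t := by
      rw [div_le_iff₀ hS0]; exact hst
    have hs2 : Real.sqrt t ≤ (t+100)/20 := by
      rw [show (t+100)/20 = Real.sqrt (((t+100)/20)^2) from (Real.sqrt_sq (by linarith)).symm]
      exact Real.sqrt_le_sqrt (by nlinarith [sq_nonneg (t-100)])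
    have he25 : (12:ℝ) ≤ Real.exp (5/2) := by
      have h5 : Real.exp ((5:ℕ) * (1:ℝ)) = Real.exp 1 ^ (5:ℕ) := Real.exp_nat_mul 1 5
      have h2 : Real.exp (5/2) ^ (2:ℕ) = Real.exp ((2:ℕ) * (5/2 : ℝ)) := (Real.exp_nat_mul _ 2).symm
      have hE71 : (2.71:ℝ) ≤ Real.exp 1 := by linarith
      have h3 : (2.71:ℝ)^(5:ℕ) ≤ Real.exp 1 ^ (5:ℕ) := pow_le_pow_left₀ (by norm_num) hE71 5
      have h4 : (144:ℝ) ≤ Real.exp (5/2) ^ 2 := by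
        rw [h2]; norm_num at h5 h3 ⊢; linarith
      nlinarith [Real.exp_pos (5/2)]
    have hs3 : (t+100)/20 ≤ Real.exp (t/40) := by
      have heq : Real.exp (t/40) = Real.exp (5/2) * Real.exp ((t-100)/40) := by
        rw [← Real.exp_add]; ring_nf
      rw [heq]
      have hb := Real.add_one_le_exp ((t-100)/40)
      calc (t+100)/20 ≤ 12 * ((t-100)/40 + 1) := by linarith
        _ ≤ Real.exp (5/2) * Real.exp ((t-100)/40) :=
            mul_le_mul he25 (by linarith) (by linarith) (Real.exp_pos _).le
    linarith
  -- the base is at least exp (1/40)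
  have hu0 : (0:ℝ) < c + 1/(2*t) := by positivity
  have hu1 : c < c + 1/(2*t) := by
    have : (0:ℝ) < 1/(2*t) := by positivity
    linarith
  have hu2 : c + 1/(2*t) ≤ c + 1/200 := by
    have : 1/(2*t) ≤ 1/200 := by
      apply one_div_le_one_div_of_le <;> linarith
    linarith
  have hbase : Real.exp (1/40) ≤ (2 : ℝ) ^ (2 * c) * (c + 1) ^ (2 * c + 2) /
          (3 * Real.exp (2 * c + 1) * (c + 1 / (2 * t)) ^ (2 * c + 1)) := by
    rw [stmt16_base_eq c (c + 1/(2*t)) hc0 hu0]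
    exact stmt16_core c (c + 1/(2*t)) (Real.exp 1) hc0 hc1 hu1 hu2 hE1 hE2 h40
  have hpow : Real.exp (t/40) = (Real.exp (1/40)) ^ (t:ℝ) := by
    rw [← Real.exp_one_rpow (1/40), ← Real.rpow_mul (Real.exp_pos 1).le,
      Real.exp_one_rpow, show (1/40 * t : ℝ) = t/40 by ring]
  calc 2 * c * t * Real.exp (1 / (12 * t)) / Real.sqrt (8 * c * t * Real.pi)
      ≤ Real.exp (t/40) := hLHS
    _ = (Real.exp (1/40)) ^ (t:ℝ) := hpow
    _ ≤ ((2 : ℝ) ^ (2 * c) * (c + 1) ^ (2 * c + 2) /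
          (3 * Real.exp (2 * c + 1) * (c + 1 / (2 * t)) ^ (2 * c + 1))) ^ t :=
        Real.rpow_le_rpow (Real.exp_pos _).le hbase ht0.le
end

section
/- Let r ≥ 1 and let t_1, ..., t_r be positive integers with S = t_1 + ... + t_r. For nonnegative integers a, b, let N(a,b) be the number of ways to choose, for each index i ∈ {1,...,r}, an interval I_i of t_i consecutive positions lying entirely within either the left line {1,...,a} or the right line {1,...,b}, such that for all i ≠ j whose intervals lie in the same line, the intervals I_i and I_j are disjoint and non-adjacent (their union is not an interval of consecutive positions). Then N(a,b) depends only on a + b in the range a, b ≥ S − 1: whenever a, b, a', b' ≥ S − 1 and a + b = a' + b', one has N(a,b) = N(a',b'). -/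
/-- A placement of `r` ordered blocks of sizes `t i` on two disjoint lines of balls, of lengths
`a` (left, value `false`) and `b` (right, value `true`).  A block is recorded as a pair
(side, starting position); it occupies the `t i` consecutive positions
`s, s+1, …, s + t i − 1` of its line.  Distinct blocks on the same line must be disjoint and
non-adjacent, i.e. separated by at least one free position. -/
def IsPlacement (r : ℕ) (t : Fin r → ℕ) (a b : ℕ) (f : Fin r → Bool × ℕ) : Prop :=
  (∀ i : Fin r, 1 ≤ (f i).2 ∧ (f i).2 + t i - 1 ≤ (if (f i).1 then b else a)) ∧
  ∀ i j : Fin r, i ≠ j → (f i).1 = (f j).1 →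
    ((f i).2 + t i < (f j).2 ∨ (f j).2 + t j < (f i).2)

/-- The number of placements counted in Lemma A.1 (`N(a,b;t₁,…,t_r)`). -/
noncomputable def placementCount (r : ℕ) (t : Fin r → ℕ) (a b : ℕ) : ℕ :=
  Nat.card {f : Fin r → Bool × ℕ // IsPlacement r t a b f}

lemma placement_finite {r : ℕ} {t : Fin r → ℕ} (ht : ∀ i, 1 ≤ t i) (a b : ℕ) :
    Finite {f : Fin r → Bool × ℕ // IsPlacement r t a b f} := by
  apply Finite.of_injective
    (fun f : {f : Fin r → Bool × ℕ // IsPlacement r t a b f} =>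
      (fun i : Fin r => ((f.1 i).1, (⟨min (f.1 i).2 (a + b), by omega⟩ : Fin (a + b + 1)))))
  intro f g hfg
  have hbound : ∀ (h : {f : Fin r → Bool × ℕ // IsPlacement r t a b f}) (i : Fin r),
      (h.1 i).2 ≤ a + b := by
    intro h i
    obtain ⟨h1, h2⟩ := h.2.1 i
    have := ht i
    cases hc : (h.1 i).1
    · rw [hc, if_neg Bool.false_ne_true] at h2; omega
    · rw [hc, if_pos rfl] at h2; omega
  apply Subtype.ext
  funext i
  have heq := congrFun hfg i
  simp only [Prod.mk.injEq, Fin.mk.injEq] at heq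
  have h1 := hbound f i
  have h2 := hbound g i
  have e2' : (f.1 i).2 = (g.1 i).2 := by omega
  exact Prod.ext heq.1 e2'

lemma placementCount_zero (t : Fin 0 → ℕ) (a b : ℕ) : placementCount 0 t a b = 1 := by
  have : Unique {f : Fin 0 → Bool × ℕ // IsPlacement 0 t a b f} := by
    refine ⟨⟨⟨fun i => i.elim0, ⟨fun i => i.elim0, fun i => i.elim0⟩⟩⟩, ?_⟩
    intro f
    apply Subtype.ext
    funext i
    exact i.elim0
  exact Nat.card_unique

lemma placementCount_swap (r : ℕ) (t : Fin r → ℕ) (a b : ℕ) :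
    placementCount r t a b = placementCount r t b a := by
  unfold placementCount
  apply Nat.card_congr
  have key : ∀ a b (f : Fin r → Bool × ℕ), IsPlacement r t a b f →
      IsPlacement r t b a (fun i => (!(f i).1, (f i).2)) := by
    intro a b f hf
    constructor
    · intro i
      obtain ⟨h1, h2⟩ := hf.1 i
      refine ⟨h1, ?_⟩
      cases hc : (f i).1 <;> rw [hc] at h2 <;> simp [hc] at h2 ⊢ <;> exact h2
    · intro i j hij hside
      exact hf.2 i j hij (by simpa using hside)
  refine ⟨fun f => ⟨fun i => (!(f.1 i).1, (f.1 i).2), key a b f.1 f.2⟩,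
    fun f => ⟨fun i => (!(f.1 i).1, (f.1 i).2), key b a f.1 f.2⟩, ?_, ?_⟩ <;>
  · intro f; apply Subtype.ext; funext i; simp

section Rec

variable {n : ℕ} {t : Fin (n + 1) → ℕ} {a b : ℕ}

/-- Inserting a block ending exactly at position `b` of the right line. -/
lemma insert_isPlacement (ht : ∀ i, 1 ≤ t i) (hb : ∀ i, t i ≤ b) (i : Fin (n + 1))
    (g : Fin n → Bool × ℕ) (hg : IsPlacement n (t ∘ i.succAbove) a (b - t i - 1) g) :
    IsPlacement (n + 1) t a b (i.insertNth (true, b + 1 - t i) g) := by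
  constructor
  · intro j
    rcases eq_or_ne j i with rfl | hji
    · rw [Fin.insertNth_apply_same]
      show 1 ≤ b + 1 - t j ∧ b + 1 - t j + t j - 1 ≤ b
      have := ht j; have := hb j
      omega
    · obtain ⟨k, rfl⟩ := Fin.exists_succAbove_eq hji
      rw [Fin.insertNth_apply_succAbove]
      obtain ⟨h1, h2⟩ := hg.1 k
      refine ⟨h1, ?_⟩
      simp only [Function.comp_apply] at h2
      cases hc : (g k).1
      · simp [hc] at h2 ⊢ <;> omega
      · simp [hc] at h2 ⊢
        have := ht (i.succAbove k); have := ht i; have := hb i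
        omega
  · intro j j' hjj' hside
    rcases eq_or_ne j i with rfl | hji
    · obtain ⟨k, rfl⟩ := Fin.exists_succAbove_eq (Ne.symm hjj')
      rw [Fin.insertNth_apply_same] at hside ⊢
      rw [Fin.insertNth_apply_succAbove] at hside ⊢
      obtain ⟨h1, h2⟩ := hg.1 k
      rw [← hside, if_pos rfl] at h2
      simp only [Function.comp_apply] at h2
      right
      show (g k).2 + t (j.succAbove k) < b + 1 - t j
      have := ht (j.succAbove k); have := ht j; have := hb j
      omega
    · rcases eq_or_ne j' i with rfl | hj'i
      · obtain ⟨k, rfl⟩ := Fin.exists_succAbove_eq hji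
        rw [Fin.insertNth_apply_same] at hside ⊢
        rw [Fin.insertNth_apply_succAbove] at hside ⊢
        obtain ⟨h1, h2⟩ := hg.1 k
        rw [hside, if_pos rfl] at h2
        simp only [Function.comp_apply] at h2
        left
        show (g k).2 + t (j'.succAbove k) < b + 1 - t j'
        have := ht (j'.succAbove k); have := ht j'; have := hb j'
        omega
      · obtain ⟨k, rfl⟩ := Fin.exists_succAbove_eq hji
        obtain ⟨k', rfl⟩ := Fin.exists_succAbove_eq hj'i
        rw [Fin.insertNth_apply_succAbove] at hside ⊢
        rw [Fin.insertNth_apply_succAbove] at hside ⊢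
        have hkk' : k ≠ k' := fun h => hjj' (by rw [h])
        exact hg.2 k k' hkk' hside

/-- A placement on `(a, b-1)` is a placement on `(a, b)`. -/
lemma shrink_isPlacement (ht : ∀ i, 1 ≤ t i) (f : Fin (n + 1) → Bool × ℕ)
    (hf : IsPlacement (n + 1) t a (b - 1) f) : IsPlacement (n + 1) t a b f := by
  refine ⟨fun i => ?_, hf.2⟩
  obtain ⟨h1, h2⟩ := hf.1 i
  refine ⟨h1, ?_⟩
  cases hc : (f i).1
  · simp [hc] at h2 ⊢ <;> omega
  · simp [hc] at h2 ⊢; omega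

lemma placementCount_rec (n : ℕ) (t : Fin (n + 1) → ℕ) (ht : ∀ i, 1 ≤ t i) (a b : ℕ)
    (hb : ∀ i, t i ≤ b) :
    placementCount (n + 1) t a b
      = placementCount (n + 1) t a (b - 1)
        + ∑ i : Fin (n + 1), placementCount n (t ∘ i.succAbove) a (b - t i - 1) := by
  classical
  have hb1 : 1 ≤ b := le_trans (ht 0) (hb 0)
  set G : ({f : Fin (n+1) → Bool × ℕ // IsPlacement (n+1) t a (b-1) f}
      ⊕ (Σ i : Fin (n+1), {g : Fin n → Bool × ℕ //
          IsPlacement n (t ∘ i.succAbove) a (b - t i - 1) g}))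
      → {f : Fin (n+1) → Bool × ℕ // IsPlacement (n+1) t a b f} :=
    Sum.elim (fun f => ⟨f.1, shrink_isPlacement ht f.1 f.2⟩)
      (fun p => ⟨p.1.insertNth (true, b + 1 - t p.1) p.2.1,
        insert_isPlacement ht hb p.1 p.2.1 p.2.2⟩) with hG
  have hinj : Function.Injective G := by
    rintro (⟨f, hf⟩ | ⟨i, g, hg⟩) (⟨f', hf'⟩ | ⟨i', g', hg'⟩) hxy <;>
      simp only [hG, Sum.elim_inl, Sum.elim_inr, Subtype.mk.injEq] at hxy
    · exact congrArg Sum.inl (Subtype.ext hxy)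
    · exfalso
      obtain ⟨h1, h2⟩ := hf.1 i'
      have hv : f i' = (true, b + 1 - t i') := by rw [hxy, Fin.insertNth_apply_same]
      rw [hv, if_pos rfl] at h2
      rw [hv] at h1
      simp only at h1 h2
      have := ht i'; have := hb i'
      omega
    · exfalso
      obtain ⟨h1, h2⟩ := hf'.1 i
      have hv : f' i = (true, b + 1 - t i) := by rw [← hxy, Fin.insertNth_apply_same]
      rw [hv, if_pos rfl] at h2
      rw [hv] at h1
      simp only at h1 h2
      have := ht i; have := hb i
      omega
    · have hii' : i = i' := by
        by_contra hne
        obtain ⟨k, hk⟩ := Fin.exists_succAbove_eq hne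
        have hv := congrFun hxy (i'.succAbove k)
        rw [Fin.insertNth_apply_succAbove, hk, Fin.insertNth_apply_same] at hv
        obtain ⟨h1, h2⟩ := hg'.1 k
        have hside : (g' k).1 = true := by rw [← hv]
        have hpos : (g' k).2 = b + 1 - t i := by rw [← hv]
        have hti : t (i'.succAbove k) = t i := by rw [hk]
        rw [hside, if_pos rfl] at h2
        simp only [Function.comp_apply, hti, hpos] at h2
        have := ht i; have := hb i; have := ht i'; have := hb i'
        omega
      subst hii'
      have hgg' : g = g' := by
        funext k
        have := congrFun hxy (i.succAbove k)
        rwa [Fin.insertNth_apply_succAbove, Fin.insertNth_apply_succAbove] at this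
      subst hgg'
      rfl
  have hsurj : Function.Surjective G := by
    rintro ⟨f, hf⟩
    by_cases h : ∃ i, (f i).1 = true ∧ (f i).2 + t i = b + 1
    · obtain ⟨i, hi1, hi2⟩ := h
      have hg : IsPlacement n (t ∘ i.succAbove) a (b - t i - 1) (f ∘ i.succAbove) := by
        constructor
        · intro k
          obtain ⟨h1, h2⟩ := hf.1 (i.succAbove k)
          refine ⟨h1, ?_⟩
          simp only [Function.comp_apply]
          rcases Bool.eq_false_or_eq_true ((f (i.succAbove k)).1) with hc | hc
          · simp [hc] at h2 ⊢
            have hsep := hf.2 (i.succAbove k) i (Fin.succAbove_ne i k) (by rw [hc, hi1])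
            have := ht (i.succAbove k)
            omega
          · simp [hc] at h2 ⊢
            omega
        · intro k k' hkk' hside
          exact hf.2 (i.succAbove k) (i.succAbove k')
            (fun hc => hkk' (i.succAbove_right_injective hc)) hside
      refine ⟨Sum.inr ⟨i, ⟨f ∘ i.succAbove, hg⟩⟩, ?_⟩
      simp only [hG, Sum.elim_inr]
      apply Subtype.ext
      dsimp only
      funext j
      rcases eq_or_ne j i with rfl | hji
      · rw [Fin.insertNth_apply_same]
        have h1 := (hf.1 j).1
        have : (f j).2 = b + 1 - t j := by omega
        rw [← hi1, ← this]
      · obtain ⟨k, rfl⟩ := Fin.exists_succAbove_eq hji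
        rw [Fin.insertNth_apply_succAbove]
        rfl
    · push_neg at h
      have hf' : IsPlacement (n+1) t a (b-1) f := by
        refine ⟨fun i => ?_, hf.2⟩
        obtain ⟨h1, h2⟩ := hf.1 i
        refine ⟨h1, ?_⟩
        cases hc : (f i).1
        · simp [hc] at h2 ⊢ <;> omega
        · simp [hc] at h2 ⊢
          have := h i hc
          have := ht i
          omega
      exact ⟨Sum.inl ⟨f, hf'⟩, rfl⟩
  have hcard := Nat.card_eq_of_bijective G ⟨hinj, hsurj⟩
  unfold placementCount
  rw [← hcard]
  haveI fin1 : Finite {f : Fin (n+1) → Bool × ℕ // IsPlacement (n+1) t a (b-1) f} :=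
    placement_finite ht a (b-1)
  haveI fin2 : ∀ i : Fin (n+1),
      Finite {g : Fin n → Bool × ℕ // IsPlacement n (t ∘ i.succAbove) a (b - t i - 1) g} :=
    fun i => placement_finite (fun k => ht (i.succAbove k)) a (b - t i - 1)
  haveI : ∀ i : Fin (n+1), Fintype {g : Fin n → Bool × ℕ //
      IsPlacement n (t ∘ i.succAbove) a (b - t i - 1) g} := fun i => Fintype.ofFinite _
  haveI : Fintype {f : Fin (n+1) → Bool × ℕ // IsPlacement (n+1) t a (b-1) f} :=
    Fintype.ofFinite _
  rw [Nat.card_sum]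
  congr 1
  rw [Nat.card_eq_fintype_card, Fintype.card_sigma]
  exact Finset.sum_congr rfl fun i _ => (Nat.card_eq_fintype_card).symm

end Rec

/-- Left-line version of the recursion. -/
lemma placementCount_rec_left (n : ℕ) (t : Fin (n + 1) → ℕ) (ht : ∀ i, 1 ≤ t i) (a b : ℕ)
    (ha : ∀ i, t i ≤ a) :
    placementCount (n + 1) t a b
      = placementCount (n + 1) t (a - 1) b
        + ∑ i : Fin (n + 1), placementCount n (t ∘ i.succAbove) (a - t i - 1) b := by
  rw [placementCount_swap, placementCount_rec n t ht b a ha,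
    placementCount_swap (n+1) t b (a-1)]
  congr 1
  exact Finset.sum_congr rfl fun i _ => placementCount_swap _ _ _ _

/-- The main invariance, proven by induction on the number of blocks. -/
lemma placementCount_invariant : ∀ (r : ℕ) (t : Fin r → ℕ), (∀ i, 0 < t i) →
    ∀ (a b a' b' : ℕ), (∑ i, t i) - 1 ≤ a → (∑ i, t i) - 1 ≤ b → (∑ i, t i) - 1 ≤ a' →
    (∑ i, t i) - 1 ≤ b' → a + b = a' + b' →
    placementCount r t a b = placementCount r t a' b' := by
  intro r
  induction r with
  | zero =>
    intro t _ a b a' b' _ _ _ _ _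
    rw [placementCount_zero, placementCount_zero]
  | succ n IH =>
    intro t ht a b a' b' ha hb ha' hb' hab
    set S := ∑ i, t i with hS
    have htS : ∀ i, t i ≤ S := fun i =>
      Finset.single_le_sum (fun j _ => Nat.zero_le (t j)) (Finset.mem_univ i)
    have hS1 : 1 ≤ S := le_trans (ht 0) (htS 0)
    have step : ∀ a b : ℕ, S - 1 ≤ a → S ≤ b →
        placementCount (n+1) t (a+1) (b-1) = placementCount (n+1) t a b := by
      intro a b ha hb
      have hta : ∀ i, t i ≤ a + 1 := fun i => by have := htS i; omega
      have htb : ∀ i, t i ≤ b := fun i => le_trans (htS i) hb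
      have R1 := placementCount_rec n t ht (a+1) b htb
      have R2 := placementCount_rec_left n t ht (a+1) b hta
      have e1 : a + 1 - 1 = a := by omega
      rw [e1] at R2
      have hterm : ∀ i : Fin (n+1),
          placementCount n (t ∘ i.succAbove) (a + 1 - t i - 1) b
            = placementCount n (t ∘ i.succAbove) (a + 1) (b - t i - 1) := by
        intro i
        rcases Nat.eq_zero_or_pos n with rfl | hn
        · rw [placementCount_zero, placementCount_zero]
        · have hSi : t i + 1 ≤ S := by
            obtain ⟨j, hj⟩ : ∃ j : Fin (n+1), j ≠ i := by
              rcases eq_or_ne i 0 with rfl | h0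
              · exact ⟨⟨1, by omega⟩, by simp [Fin.ext_iff]⟩
              · exact ⟨0, Ne.symm h0⟩
            have hsum2 : t i + t j ≤ S := by
              rw [hS]
              have herase := (Finset.add_sum_erase Finset.univ t (Finset.mem_univ i)).symm
              have hjmem : j ∈ Finset.univ.erase i := Finset.mem_erase.2 ⟨hj, Finset.mem_univ j⟩
              have := Finset.single_le_sum (fun k _ => Nat.zero_le (t k)) hjmem
              omega
            have := ht j
            omega
          have hsums : ∑ k, (t ∘ i.succAbove) k = S - t i := by
            have hsucc := Fin.sum_univ_succAbove t i
            rw [hS]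
            simp only [Function.comp_apply, Function.comp] at hsucc ⊢
            omega
          apply IH (t ∘ i.succAbove) (fun k => ht (i.succAbove k))
          · rw [hsums]; have := htS i; omega
          · rw [hsums]; omega
          · rw [hsums]; have := htS i; omega
          · rw [hsums]; omega
          · have := htS i; omega
      have e2 : ∑ i : Fin (n+1), placementCount n (t ∘ i.succAbove) (a + 1 - t i - 1) b
          = ∑ i : Fin (n+1), placementCount n (t ∘ i.succAbove) (a + 1) (b - t i - 1) :=
        Finset.sum_congr rfl fun i _ => hterm i
      rw [e2] at R2
      omega
    have tele : ∀ (k a b : ℕ), S - 1 ≤ a → S - 1 + k ≤ b →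
        placementCount (n+1) t a b = placementCount (n+1) t (a+k) (b-k) := by
      intro k
      induction k with
      | zero => intro a b _ _; simp
      | succ m IHm =>
        intro a b ha hbm
        have hbS : S ≤ b := by omega
        rw [← step a b ha hbS]
        rw [IHm (a+1) (b-1) (by omega) (by omega)]
        congr 1 <;> omega
    rcases le_total a a' with hle | hle
    · obtain ⟨k, rfl⟩ := Nat.exists_eq_add_of_le hle
      have hbk : b - k = b' := by omega
      rw [tele k a b ha (by omega), hbk]
    · obtain ⟨k, rfl⟩ := Nat.exists_eq_add_of_le hle
      have hbk : b' - k = b := by omega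
      rw [tele k a' b' ha' (by omega), hbk]

/-- For block sizes `t₁,…,t_r` with sum `S`, the count `N(a,b)` depends only
on `a + b` in the range `a, b ≥ S − 1`. -/
theorem stmt17 (r : ℕ) (hr : 1 ≤ r) (t : Fin r → ℕ) (ht : ∀ i, 0 < t i)
    (S : ℕ) (hS : S = ∑ i, t i) (a b a' b' : ℕ)
    (ha : S - 1 ≤ a) (hb : S - 1 ≤ b) (ha' : S - 1 ≤ a') (hb' : S - 1 ≤ b')
    (hab : a + b = a' + b') :
    placementCount r t a b = placementCount r t a' b' := by
  subst hS
  exact placementCount_invariant r t ht a b a' b' ha hb ha' hb' hab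
end
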